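/- arXiv:1810.05613 — 10 statements merged into one kernel-verified Lean document; each statement's English description precedes it below -/
import Mathlib

section
/- Let G and H be topological groups and f : G → H a continuous surjective group homomorphism. Then f is skeletal if and only if f is nearly open. -/
/-!
Nearly open maps are trivially skeletal. Conversely, let `x ∈ U`. Choose an open `A ∋ 1` with
`x * a⁻¹ * b ∈ U` for all `a b ∈ A`. Skeletality makes `interior (closure (f '' A))` a nonempty
open subset of `closure (f '' A)`, so it contains some `f a` with `a ∈ A`. Translating by
`f (x * a⁻¹)`, a homeomorphism of `H`, carries `f a` to `f x` and `f '' A` into `f '' U`.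
-/

open scoped Pointwise

open Set Topology

section

variable {X Y : Type*} [TopologicalSpace X] [TopologicalSpace Y]

def IsSkeletal (f : X → Y) : Prop :=
  ∀ U : Set X, IsOpen U → U.Nonempty → (interior (closure (f '' U))).Nonempty

def IsNearlyOpen (f : X → Y) : Prop :=
  ∀ U : Set X, IsOpen U → f '' U ⊆ interior (closure (f '' U))

theorem IsNearlyOpen.isSkeletal {f : X → Y} (hf : IsNearlyOpen f) : IsSkeletal f :=
  fun U hU ⟨x, hx⟩ => ⟨f x, hf U hU (mem_image_of_mem f hx)⟩

theorem inter_interior_closure_nonempty {s : Set Y} (h : (interior (closure s)).Nonempty) :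
    (s ∩ interior (closure s)).Nonempty :=
  (closure_inter_open_nonempty_iff isOpen_interior).1 ⟨_, interior_subset h.some_mem, h.some_mem⟩

end

theorem exists_isOpen_one_mem_forall_inv_mul_mem {G : Type*} [Group G] [TopologicalSpace G]
    [IsTopologicalGroup G] {s : Set G} (hs : s ∈ 𝓝 (1 : G)) :
    ∃ V : Set G, IsOpen V ∧ (1 : G) ∈ V ∧ ∀ v ∈ V, ∀ w ∈ V, v⁻¹ * w ∈ s := by
  have : (fun p : G × G => p.1⁻¹ * p.2) ⁻¹' s ∈ 𝓝 ((1, 1) : G × G) :=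
    continuousAt_fst.inv.mul continuousAt_snd (by simpa)
  simpa only [prod_subset_iff, mem_preimage] using exists_nhds_square this

theorem MonoidHom.mul_mem_interior_closure_image {G H : Type*} [Group G] [Group H]
    [TopologicalSpace H] [ContinuousConstSMul H H] (f : G →* H) {A U : Set G} {g a : G}
    (ha : f a ∈ interior (closure (f '' A))) (hA : g • A ⊆ U) :
    f g * f a ∈ interior (closure (f '' U)) := by
  have hmem : f g * f a ∈ f g • interior (closure (f '' A)) := smul_mem_smul_set ha
  rw [← interior_smul, ← closure_smul, ← image_smul_distrib] at hmem
  exact interior_mono (closure_mono (image_mono hA)) hmem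

theorem IsSkeletal.isNearlyOpen_monoidHom {G H : Type*} [Group G] [TopologicalSpace G]
    [IsTopologicalGroup G] [Group H] [TopologicalSpace H] [ContinuousConstSMul H H]
    {f : G →* H} (hf : IsSkeletal f) : IsNearlyOpen f := by
  rintro U hU _ ⟨x, hx, rfl⟩
  have hU₁ : (x * ·) ⁻¹' U ∈ 𝓝 (1 : G) :=
    (hU.preimage (continuous_const_mul x)).mem_nhds (by simpa)
  obtain ⟨A, hA, hA₁, hAU⟩ := exists_isOpen_one_mem_forall_inv_mul_mem hU₁
  obtain ⟨_, ⟨a, ha, rfl⟩, hfa⟩ := inter_interior_closure_nonempty (hf A hA ⟨1, hA₁⟩)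
  have htrans : (x * a⁻¹) • A ⊆ U := by
    rintro _ ⟨b, hb, rfl⟩
    simpa only [smul_eq_mul, mul_assoc, mem_preimage] using hAU a ha b hb
  simpa only [← map_mul, inv_mul_cancel_right] using f.mul_mem_interior_closure_image hfa htrans

theorem skeletal_iff_nearlyOpen_of_continuous_surjective_hom_general
    {G H : Type*} [Group G] [TopologicalSpace G] [IsTopologicalGroup G]
    [Group H] [TopologicalSpace H] [IsTopologicalGroup H]
    (f : G →* H) :
    (∀ U : Set G, IsOpen U → U.Nonempty → (interior (closure (f '' U))).Nonempty) ↔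
    (∀ U : Set G, IsOpen U → f '' U ⊆ interior (closure (f '' U))) :=
  ⟨IsSkeletal.isNearlyOpen_monoidHom, IsNearlyOpen.isSkeletal⟩

/-- A continuous surjective homomorphism between topological groups
is skeletal iff it is nearly open. -/
theorem skeletal_iff_nearlyOpen_of_continuous_surjective_hom
    {G H : Type*} [Group G] [TopologicalSpace G] [IsTopologicalGroup G]
    [Group H] [TopologicalSpace H] [IsTopologicalGroup H]
    (f : G →* H) (hc : Continuous f) (hs : Function.Surjective f) :
    (∀ U : Set G, IsOpen U → U.Nonempty → (interior (closure (f '' U))).Nonempty) ↔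
    (∀ U : Set G, IsOpen U → f '' U ⊆ interior (closure (f '' U))) :=
  skeletal_iff_nearlyOpen_of_continuous_surjective_hom_general f
end

section
/- Every second-countable regular topological space Y embedded in a second-countable regular space X is regularly embedded: there exists an operator e from open sets of Y to open sets of X such that e(U) ∩ Y = U for all open U ⊆ Y and e(U) ∩ e(V) = ∅ whenever U ∩ V = ∅. -/
/-!
Metrize `X`. An open `U ⊆ Y` is sent to the set of points of `X` that are strictly closer to `U`
than to `Y \ U`. This set is open, two disjoint opens give disjoint sets since each complement
contains the other set, and it traces `U` on `Y` because a point of `U` has positive distance from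
the relatively closed set `Y \ U`.
-/

open Set Topology Metric

section RegularExtension

variable {Y X : Type*} [PseudoEMetricSpace X]

def regularExtension (f : Y → X) (U : Set Y) : Set X :=
  {x | infEDist x (f '' U) < infEDist x (f '' Uᶜ)}

theorem isOpen_regularExtension (f : Y → X) (U : Set Y) : IsOpen (regularExtension f U) :=
  isOpen_lt continuous_infEDist continuous_infEDist

theorem disjoint_regularExtension (f : Y → X) {U V : Set Y} (hUV : Disjoint U V) :
    Disjoint (regularExtension f U) (regularExtension f V) := by
  refine Set.disjoint_left.2 fun x hxU hxV => lt_irrefl (infEDist x (f '' U)) ?_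
  calc infEDist x (f '' U) < infEDist x (f '' Uᶜ) := hxU
    _ ≤ infEDist x (f '' V) := infEDist_anti (image_mono hUV.subset_compl_left)
    _ < infEDist x (f '' Vᶜ) := hxV
    _ ≤ infEDist x (f '' U) := infEDist_anti (image_mono hUV.subset_compl_right)

theorem Topology.IsInducing.preimage_regularExtension [TopologicalSpace Y] {f : Y → X}
    (hf : IsInducing f) {U : Set Y} (hU : IsOpen U) : f ⁻¹' regularExtension f U = U := by
  ext y
  simp only [regularExtension, mem_preimage, mem_ofPred_eq]
  constructor
  · intro hy
    by_contra hyU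
    simp [infEDist_zero_of_mem (mem_image_of_mem f (show y ∈ Uᶜ from hyU))] at hy
  · intro hy
    have hy_far : f y ∉ closure (f '' Uᶜ) := by
      rw [← mem_preimage, ← hf.closure_eq_preimage_closure_image, hU.isClosed_compl.closure_eq]
      exact not_not_intro hy
    rw [infEDist_zero_of_mem (mem_image_of_mem f hy)]
    exact infEDist_pos_iff_notMem_closure.2 hy_far

end RegularExtension

/-- Every subspace `Y` of a second-countable regular space `X` is
regularly embedded: there is an operator `e` from opens of `Y` to opens of `X`
with `e(U) ∩ Y = U` and `e(U) ∩ e(V) = ∅` for disjoint open `U, V`. -/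
theorem regularly_embedded_of_secondCountable_regular
    {X : Type*} [TopologicalSpace X] [SecondCountableTopology X] [RegularSpace X]
    (Y : Set X) :
    ∃ e : Set Y → Set X,
      (∀ U : Set Y, IsOpen U → IsOpen (e U)) ∧
      (∀ U : Set Y, IsOpen U → (Subtype.val ⁻¹' (e U) : Set Y) = U) ∧
      (∀ U V : Set Y, IsOpen U → IsOpen V → U ∩ V = ∅ → e U ∩ e V = ∅) := by
  let _ : PseudoMetricSpace X := TopologicalSpace.pseudoMetrizableSpacePseudoMetric X
  refine ⟨regularExtension Subtype.val, fun U _ => isOpen_regularExtension _ U,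
    fun U hU => IsInducing.subtypeVal.preimage_regularExtension hU, fun U V _ _ hUV => ?_⟩
  rw [← disjoint_iff_inter_eq_empty] at hUV ⊢
  exact disjoint_regularExtension _ hUV
end

section
/- Let G be a topological group that is a subgroup of a product Π = ∏_{α∈Γ} G_α of second-countable topological groups, and suppose G is second-countable. Then there exists a countable set A ⊆ Γ such that the restriction of the projection π_A to G is a topological group isomorphism onto its image π_A(G). -/
/-!
The topology of `G` is the infimum of the topologies induced by the coordinate maps, so the
finite-coordinate cylinders form a basis of `G`. A second-countable space has a countable basis inside any basis, and the finitely many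
coordinates of each of its countably many cylinders form the set `A`. Injectivity follows
because `G` is Hausdorff, and the projection is a homomorphism coordinatewise.
-/

open Topology TopologicalSpace

theorem TopologicalSpace.exists_countable_iInf_eq {X ι : Type*} {t : TopologicalSpace X}
    [SecondCountableTopology X] {T : ι → TopologicalSpace X} (h : t = ⨅ i, T i) :
    ∃ A : Set ι, A.Countable ∧ t = ⨅ i : A, T i := by
  have hB := IsTopologicalBasis.iInf (t := T) fun i ↦ @isTopologicalBasis_opens X (T i)
  rw [← h] at hB
  obtain ⟨s, hsB, hsc, hs⟩ := hB.exists_countable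
  choose! U F hU hSU using fun S (hS : S ∈ s) ↦ hsB hS
  set A := ⋃ S ∈ s, (F S : Set ι)
  refine ⟨A, hsc.biUnion fun S _ ↦ (F S).countable_toSet, ?_⟩
  refine le_antisymm (h ▸ le_iInf fun i ↦ iInf_le _ _) ?_
  rw [hs.eq_generateFrom]
  refine le_generateFrom fun S hS ↦ ?_
  rw [hSU S hS]
  refine @isOpen_biInter_finset _ _ (⨅ i : A, T i) _ _ fun i hi ↦ ?_
  exact (hU S hS i hi).mono (iInf_le (fun j : A ↦ T j) ⟨i, Set.mem_biUnion hS hi⟩)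

theorem Topology.IsInducing.exists_countable_restrict {X ι : Type*} {Y : ι → Type*}
    [TopologicalSpace X] [SecondCountableTopology X] [∀ i, TopologicalSpace (Y i)]
    {f : X → ∀ i, Y i} (hf : IsInducing f) :
    ∃ A : Set ι, A.Countable ∧ IsInducing fun x (i : A) ↦ f x i := by
  obtain ⟨A, hAc, hA⟩ := exists_countable_iInf_eq (hf.eq_induced.trans (induced_to_pi f))
  exact ⟨A, hAc, ⟨hA.trans (induced_to_pi _).symm⟩⟩

theorem exists_countable_coordinates_iso_general
    {Γ : Type*} (Gf : Γ → Type*) [∀ α, Group (Gf α)] [∀ α, TopologicalSpace (Gf α)]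
    [∀ α, T2Space (Gf α)]
    (G : Subgroup (∀ α, Gf α)) [SecondCountableTopology G] :
    ∃ A : Set Γ, A.Countable ∧
      (∀ g h : G, (fun α : A => (g : ∀ α, Gf α) α) = (fun α : A => (h : ∀ α, Gf α) α) →
        g = h) ∧
      Topology.IsInducing (fun (g : G) (α : A) => (g : ∀ α, Gf α) α) ∧
      (∀ g h : G, (fun α : A => ((g * h : G) : ∀ α, Gf α) α) =
        (fun α : A => (g : ∀ α, Gf α) α) * (fun α : A => (h : ∀ α, Gf α) α)) := by
  obtain ⟨A, hA, hind⟩ := IsInducing.subtypeVal.exists_countable_restrict (X := G)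
  exact ⟨A, hA, fun _ _ hgh ↦ hind.injective hgh, hind, fun _ _ ↦ rfl⟩

/-- A second-countable subgroup `G` of a product of second-countable
(Hausdorff) topological groups admits a countable set `A` of coordinates such that
the projection `π_A` restricted to `G` is a topological group isomorphism onto its
image, i.e. it is an injective inducing homomorphism. -/
theorem exists_countable_coordinates_iso
    {Γ : Type*} (Gf : Γ → Type*) [∀ α, Group (Gf α)] [∀ α, TopologicalSpace (Gf α)]
    [∀ α, IsTopologicalGroup (Gf α)] [∀ α, SecondCountableTopology (Gf α)]
    [∀ α, T2Space (Gf α)]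
    (G : Subgroup (∀ α, Gf α)) [SecondCountableTopology G] :
    ∃ A : Set Γ, A.Countable ∧
      (∀ g h : G, (fun α : A => (g : ∀ α, Gf α) α) = (fun α : A => (h : ∀ α, Gf α) α) →
        g = h) ∧
      Topology.IsInducing (fun (g : G) (α : A) => (g : ∀ α, Gf α) α) ∧
      (∀ g h : G, (fun α : A => ((g * h : G) : ∀ α, Gf α) α) =
        (fun α : A => (g : ∀ α, Gf α) α) * (fun α : A => (h : ∀ α, Gf α) α)) :=
  exists_countable_coordinates_iso_general Gf G
end

section
/- Let S = {X_α, p^β_α, A} be an inverse system over a directed set A with all bonding maps p^β_α continuous surjective, and let X ⊆ lim← S be a subset with p_α(X) = X_α for all α (X is the almost limit of S). If all bonding maps p^β_α are nearly open, then every limit projection p_α restricted to X is nearly open as a map X → X_α. -/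
/-- Let `S = {X_α, p^β_α, A}` be an inverse system over a directed
set with continuous surjective nearly open bonding maps, and let `X` be a subset
of the inverse limit with `p_α(X) = X_α` for all `α`.  Then every limit
projection restricted to `X` is nearly open. -/
theorem limit_projection_nearlyOpen
    {A : Type*} [Preorder A] [IsDirected A (· ≤ ·)]
    (Xf : A → Type*) [∀ α, TopologicalSpace (Xf α)]
    (p : ∀ {α β : A}, α ≤ β → Xf β → Xf α)
    (hpc : ∀ {α β : A} (h : α ≤ β), Continuous (p h))
    (hps : ∀ {α β : A} (h : α ≤ β), Function.Surjective (p h))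
    (hcomp : ∀ {α β γ : A} (h₁ : α ≤ β) (h₂ : β ≤ γ) (x : Xf γ),
      p h₁ (p h₂ x) = p (h₁.trans h₂) x)
    (hno : ∀ {α β : A} (h : α ≤ β) (U : Set (Xf β)), IsOpen U →
      p h '' U ⊆ interior (closure (p h '' U)))
    (X : Set (∀ α, Xf α))
    (hXlim : ∀ x ∈ X, ∀ {α β : A} (h : α ≤ β), p h (x β) = x α)
    (hXsurj : ∀ α : A, Function.Surjective (fun x : X => (x : ∀ α, Xf α) α)) :
    ∀ (α : A) (U : Set X), IsOpen U →
      (fun x : X => (x : ∀ α, Xf α) α) '' U ⊆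
        interior (closure ((fun x : X => (x : ∀ α, Xf α) α) '' U)) := by
  classical
  intro α U hU
  haveI : Nonempty A := ⟨α⟩
  rw [isOpen_induced_iff] at hU
  obtain ⟨V, hV, rfl⟩ := hU
  rintro _ ⟨x, hxU, rfl⟩
  obtain ⟨I, u, hu, hsub⟩ := isOpen_pi_iff.1 hV _ hxU
  obtain ⟨γ, hγ⟩ := Finset.exists_le (insert α I)
  have hαγ : α ≤ γ := hγ α (Finset.mem_insert_self _ _)
  set W : Set (Xf γ) :=
    ⋂ β : {β // β ∈ I}, p (hγ β (Finset.mem_insert_of_mem β.2)) ⁻¹' u β with hW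
  have hWopen : IsOpen W :=
    isOpen_iInter_of_finite fun β =>
      (hu β β.2).1.preimage (hpc (hγ β (Finset.mem_insert_of_mem β.2)))
  have hxW : (x : ∀ α, Xf α) γ ∈ W := by
    simp only [hW, Set.mem_iInter, Set.mem_preimage]
    intro β
    rw [hXlim x.1 x.2]
    exact (hu β β.2).2
  have key : p hαγ '' W ⊆ (fun x : X => (x : ∀ α, Xf α) α) '' (Subtype.val ⁻¹' V) := by
    rintro _ ⟨z, hz, rfl⟩
    obtain ⟨y, hy⟩ := hXsurj γ z
    have hy' : (y : ∀ α, Xf α) γ = z := hy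
    refine ⟨y, ?_, ?_⟩
    · apply hsub
      intro β hβ
      have : p (hγ β (Finset.mem_insert_of_mem hβ)) ((y : ∀ α, Xf α) γ) ∈ u β := by
        rw [hy']
        exact (Set.mem_iInter.1 hz ⟨β, hβ⟩)
      rwa [hXlim y.1 y.2] at this
    · show (y : ∀ α, Xf α) α = p hαγ z
      rw [← hy', hXlim y.1 y.2]
  have hx : (x : ∀ α, Xf α) α ∈ p hαγ '' W := by
    refine ⟨(x : ∀ α, Xf α) γ, hxW, ?_⟩
    exact hXlim x.1 x.2 hαγ
  exact interior_mono (closure_mono key) (hno hαγ W hWopen hx)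
end

section
/- Every topological group G with countable cellularity (every pairwise disjoint family of nonempty open subsets of G is countable) which is Hausdorff is ω-narrow: for every open neighborhood U of the identity there is a countable set S ⊆ G with G = S·U. -/
/-!
Take an open neighborhood `V` of the identity with `V / V ⊆ U` and, by Zorn's lemma, a maximal
set `S` whose translates `s • V` are pairwise disjoint. Countable cellularity makes `S` countable.
If some `g` were outside `S * (V / V)`, then `g • V` would miss every `s • V` and `S` could be
enlarged by `g`; hence `G = S * (V / V) ⊆ S * U`.
-/

open Set
open scoped Pointwise

def HasCountableCellularity (X : Type*) [TopologicalSpace X] : Prop :=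
  ∀ 𝒰 : Set (Set X), (∀ U ∈ 𝒰, IsOpen U ∧ U.Nonempty) →
    (𝒰.Pairwise fun U V => U ∩ V = ∅) → 𝒰.Countable

theorem exists_maximal_pairwiseDisjoint {ι α : Type*} (f : ι → Set α) :
    ∃ S : Set ι, Maximal (fun S => S.PairwiseDisjoint f) S :=
  zorn_subset _ fun _ hc hchain =>
    ⟨_, (pairwiseDisjoint_sUnion hchain.directedOn).2 hc, fun _ => subset_sUnion_of_mem⟩

theorem Set.PairwiseDisjoint.countable_of_hasCountableCellularity {ι X : Type*}
    [TopologicalSpace X] (hX : HasCountableCellularity X) {S : Set ι} {f : ι → Set X}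
    (hS : S.PairwiseDisjoint f) (hopen : ∀ i ∈ S, IsOpen (f i))
    (hne : ∀ i ∈ S, (f i).Nonempty) : S.Countable := by
  have himage : (f '' S).Countable := by
    refine hX _ (forall_mem_image.2 fun i hi => ⟨hopen i hi, hne i hi⟩) ?_
    rintro _ ⟨i, hi, rfl⟩ _ ⟨j, hj, rfl⟩ hfij
    exact (hS hi hj fun hij => hfij (congrArg f hij)).inter_eq
  have hinj : InjOn f S := fun i hi j hj hfij =>
    let ⟨x, hx⟩ := hne i hi
    hS.elim_set hi hj x hx (hfij ▸ hx)
  exact (mapsTo_image f S).countable_of_injOn hinj himage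

theorem mul_div_eq_univ_of_maximal_pairwiseDisjoint_smul {G : Type*} [Group G] {V S : Set G}
    (hV : V.Nonempty) (hS : Maximal (fun S => S.PairwiseDisjoint (· • V)) S) :
    S * (V / V) = univ := by
  refine eq_univ_of_forall fun g => by_contra fun hg => ?_
  have hdisj : ∀ s ∈ S, g ≠ s → Disjoint (g • V) (s • V) := by
    rintro s hs -
    refine disjoint_left.2 ?_
    rintro _ ⟨v, hv, rfl⟩ ⟨w, hw, hwv⟩
    refine hg ⟨s, hs, w / v, div_mem_div hw hv, ?_⟩
    simp only [smul_eq_mul] at hwv ⊢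
    rw [← mul_div_assoc, hwv, mul_div_cancel_right]
  have hgS : g ∈ S := hS.mem_of_prop_insert (hS.prop.insert hdisj)
  obtain ⟨v, hv⟩ := hV
  exact hg ⟨g, hgS, v / v, div_mem_div hv hv, by simp⟩

theorem omega_narrow_of_ccc_general
    {G : Type*} [Group G] [TopologicalSpace G] [IsTopologicalGroup G]
    (hccc : ∀ 𝒰 : Set (Set G), (∀ U ∈ 𝒰, IsOpen U ∧ U.Nonempty) →
      (𝒰.Pairwise fun U V => U ∩ V = ∅) → 𝒰.Countable) :
    ∀ U : Set G, IsOpen U → (1 : G) ∈ U →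
      ∃ S : Set G, S.Countable ∧ ∀ g : G, ∃ s ∈ S, ∃ u ∈ U, g = s * u := by
  intro U hU h1
  obtain ⟨W, hW1, hWU⟩ := exists_nhds_split_inv (hU.mem_nhds h1)
  set V := interior W
  have hV1 : (1 : G) ∈ V := mem_interior_iff_mem_nhds.2 hW1
  obtain ⟨S, hS⟩ := exists_maximal_pairwiseDisjoint fun s : G => s • V
  have hScount : S.Countable := hS.prop.countable_of_hasCountableCellularity hccc
    (fun s _ => isOpen_interior.smul s) fun s _ => ⟨s • 1, smul_mem_smul_set hV1⟩
  refine ⟨S, hScount, fun g => ?_⟩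
  obtain ⟨s, hs, _, ⟨v, hv, w, hw, rfl⟩, hg⟩ :=
    (mul_div_eq_univ_of_maximal_pairwiseDisjoint_smul ⟨1, hV1⟩ hS).ge (mem_univ g)
  exact ⟨s, hs, v / w, hWU v (interior_subset hv) w (interior_subset hw), hg.symm⟩

/-- Every Hausdorff topological group with countable cellularity is
ω-narrow: for every open neighborhood `U` of the identity there is a countable
set `S` with `G = S·U`. -/
theorem omega_narrow_of_ccc
    {G : Type*} [Group G] [TopologicalSpace G] [IsTopologicalGroup G] [T2Space G]
    (hccc : ∀ 𝒰 : Set (Set G), (∀ U ∈ 𝒰, IsOpen U ∧ U.Nonempty) →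
      (𝒰.Pairwise fun U V => U ∩ V = ∅) → 𝒰.Countable) :
    ∀ U : Set G, IsOpen U → (1 : G) ∈ U →
      ∃ S : Set G, S.Countable ∧ ∀ g : G, ∃ s ∈ S, ∃ u ∈ U, g = s * u :=
  omega_narrow_of_ccc_general hccc
end

section
/- Let G be a topological group isomorphically embedded in a product Π of topological groups such that G is z-embedded in Π and Π is ℝ-factorizable, each factor being second-countable. Then every cozero subset of G is the trace on G of a cozero subset of Π that depends on countably many coordinates, i.e., there is a countable set B of coordinates and a cozero set W of the subproduct with U = G ∩ π_B⁻¹(W). -/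
/-- A cozero set: the set of points where some continuous real-valued function
is nonzero. -/
def IsCozero {X : Type*} [TopologicalSpace X] (S : Set X) : Prop :=
  ∃ f : X → ℝ, Continuous f ∧ S = {x | f x ≠ 0}

/-- A factorization of a continuous real-valued function on a topological group
through a continuous surjective homomorphism onto a second-countable topological
group. -/
structure RFactorization (H : Type*) [TopologicalSpace H] [Group H] (f : H → ℝ) where
  K : Type
  [grp : Group K]
  [top : TopologicalSpace K]
  [tg : @IsTopologicalGroup K top grp]
  [sc : @SecondCountableTopology K top]
  p : H → K
  hom : ∀ x y : H, p (x * y) = @HMul.hMul K K K (@instHMul K grp.toMul) (p x) (p y)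
  cont : @Continuous H K _ top p
  surj : Function.Surjective p
  h : K → ℝ
  hcont : @Continuous K ℝ top _ h
  fact : f = h ∘ p

/-- A topological group is ℝ-factorizable if every continuous real-valued
function on it factors through a continuous homomorphism onto a second-countable
topological group. -/
def IsRFactorizable (H : Type*) [TopologicalSpace H] [Group H] : Prop :=
  ∀ f : H → ℝ, Continuous f → Nonempty (RFactorization H f)

/-
By z-embedding, `U` is the trace of `{f ≠ 0}` for a continuous `f` on `Π`, and `f` factors as
`h ∘ p` through a continuous homomorphism `p` onto a second-countable group `K`. Each
neighbourhood of `1` in `K` pulls back to a neighbourhood of `1` in `Π`, which contains a box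
restricting only finitely many coordinates; a countable base at `1` thus yields a countable
set `B` of coordinates such that `p z` lies in every neighbourhood of `1` whenever `z` is `1`
on `B`. If `x` and `y` agree on `B`, then `p x = p (x * y⁻¹) * p y` specializes to `p y`, so
`f x = f y`. Hence `f` factors continuously through the projection onto `∏_{α ∈ B} G_α`.
-/

open Topology

section Product

variable {ι : Type*} {X : ι → Type*} [∀ i, TopologicalSpace (X i)]

theorem exists_finset_forall_mem_of_mem_nhds_pi {x : ∀ i, X i} {s : Set (∀ i, X i)}
    (hs : s ∈ 𝓝 x) : ∃ I : Finset ι, ∀ y : ∀ i, X i, (∀ i ∈ I, y i = x i) → y ∈ s := by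
  rw [nhds_pi, Filter.mem_pi'] at hs
  obtain ⟨I, t, ht, hts⟩ := hs
  exact ⟨I, fun y hy => hts fun i hi => (hy i hi).symm ▸ mem_of_mem_nhds (ht i)⟩

theorem ContinuousAt.exists_countable_forall_specializes_of_pi {Y : Type*} [TopologicalSpace Y]
    {f : (∀ i, X i) → Y} {x : ∀ i, X i} (hf : ContinuousAt f x)
    [(𝓝 (f x)).IsCountablyGenerated] :
    ∃ B : Set ι, B.Countable ∧ ∀ y : ∀ i, X i, (∀ i ∈ B, y i = x i) → f y ⤳ f x := by
  obtain ⟨V, hV⟩ := (𝓝 (f x)).exists_antitone_basis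
  choose I hI using fun n => exists_finset_forall_mem_of_mem_nhds_pi (hf (hV.mem n))
  refine ⟨⋃ n, (I n : Set ι), Set.countable_iUnion fun n => (I n).countable_toSet, ?_⟩
  intro y hy
  rw [hV.toHasBasis.specializes_iff]
  exact fun n _ => hI n y fun i hi => hy i (Set.mem_iUnion_of_mem n hi)

theorem DependsOn.exists_continuous_comp_domRestrict [Nonempty (∀ i, X i)] {Y : Type*}
    [TopologicalSpace Y] {f : (∀ i, X i) → Y} {s : Set ι} (hfs : DependsOn f s)
    (hf : Continuous f) :
    ∃ g : (∀ i : s, X i) → Y, Continuous g ∧ f = g ∘ s.domRestrict := by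
  classical
  obtain ⟨x₀⟩ := ‹Nonempty (∀ i, X i)›
  let extend (w : ∀ i : s, X i) (i : ι) : X i := if h : i ∈ s then w ⟨i, h⟩ else x₀ i
  have hextend : Continuous extend := by
    refine continuous_pi fun i => ?_
    by_cases hi : i ∈ s
    · simpa [extend, hi] using continuous_apply (⟨i, hi⟩ : s)
    · simpa [extend, hi] using continuous_const
  refine ⟨f ∘ extend, hf.comp hextend, funext fun x => hfs fun i hi => ?_⟩
  simp [extend, hi]

theorem MonoidHom.exists_countable_forall_specializes_of_pi [∀ i, Group (X i)] {K : Type*}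
    [Group K] [TopologicalSpace K] [IsTopologicalGroup K] [FirstCountableTopology K]
    (p : (∀ i, X i) →* K) (hp : Continuous p) :
    ∃ B : Set ι, B.Countable ∧ ∀ x y : ∀ i, X i, (∀ i ∈ B, x i = y i) → p x ⤳ p y := by
  obtain ⟨B, hB, hBp⟩ := hp.continuousAt.exists_countable_forall_specializes_of_pi (x := 1)
  refine ⟨B, hB, fun x y hxy => ?_⟩
  have hquot : p (x * y⁻¹) ⤳ 1 := by
    simpa using hBp (x * y⁻¹) fun i hi => by simp [hxy i hi]
  simpa using hquot.mul (specializes_refl (p y))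

theorem RFactorization.exists_countable_dependsOn [∀ i, Group (X i)] {f : (∀ i, X i) → ℝ}
    (F : RFactorization (∀ i, X i) f) : ∃ B : Set ι, B.Countable ∧ DependsOn f B := by
  let := F.grp
  let := F.top
  have := F.tg
  have := F.sc
  obtain ⟨B, hB, hBp⟩ :=
    (MonoidHom.mk' F.p F.hom).exists_countable_forall_specializes_of_pi F.cont
  refine ⟨B, hB, fun x y hxy => ?_⟩
  rw [F.fact]
  exact ((hBp x y hxy).map F.hcont).eq

end Product

theorem cozero_depends_on_countably_many_coordinates_general
    {Γ : Type*} (Gf : Γ → Type*) [∀ α, Group (Gf α)] [∀ α, TopologicalSpace (Gf α)]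
    (G : Subgroup (∀ α, Gf α))
    (hz : ∀ U : Set G, IsCozero U →
      ∃ W : Set (∀ α, Gf α), IsCozero W ∧ (Subtype.val ⁻¹' W : Set G) = U)
    (hRf : IsRFactorizable (∀ α, Gf α))
    (U : Set G) (hU : IsCozero U) :
    ∃ B : Set Γ, B.Countable ∧
      ∃ W : Set (∀ α : B, Gf α), IsCozero W ∧
        U = {g : G | (fun α : B => (g : ∀ α, Gf α) α) ∈ W} := by
  obtain ⟨W₀, ⟨f, hf, rfl⟩, rfl⟩ := hz U hU
  obtain ⟨F⟩ := hRf f hf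
  obtain ⟨B, hB, hfB⟩ := F.exists_countable_dependsOn
  obtain ⟨g, hg, hfg⟩ := hfB.exists_continuous_comp_domRestrict hf
  refine ⟨B, hB, {w | g w ≠ 0}, ⟨g, hg, rfl⟩, ?_⟩
  rw [hfg]
  rfl

/-- If a topological group `G` is a subgroup of a product
`Π = ∏ G_α` of second-countable topological groups, `G` is z-embedded in `Π`,
and `Π` is ℝ-factorizable, then every cozero subset of `G` is the trace on `G`
of a cozero set of `Π` depending on countably many coordinates: there are a
countable set `B` of coordinates and a cozero set `W` of the subproduct with
`U = G ∩ π_B⁻¹(W)`. -/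
theorem cozero_depends_on_countably_many_coordinates
    {Γ : Type*} (Gf : Γ → Type*) [∀ α, Group (Gf α)] [∀ α, TopologicalSpace (Gf α)]
    [∀ α, IsTopologicalGroup (Gf α)] [∀ α, SecondCountableTopology (Gf α)]
    (G : Subgroup (∀ α, Gf α))
    (hz : ∀ U : Set G, IsCozero U →
      ∃ W : Set (∀ α, Gf α), IsCozero W ∧ (Subtype.val ⁻¹' W : Set G) = U)
    (hRf : IsRFactorizable (∀ α, Gf α))
    (U : Set G) (hU : IsCozero U) :
    ∃ B : Set Γ, B.Countable ∧
      ∃ W : Set (∀ α : B, Gf α), IsCozero W ∧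
        U = {g : G | (fun α : B => (g : ∀ α, Gf α) α) ∈ W} :=
  cozero_depends_on_countably_many_coordinates_general Gf G hz hRf U hU
end

section
/- Let X be a topological space and suppose player I has a winning strategy in the open-open game on X. Then X has countable cellularity: every pairwise disjoint family of nonempty open subsets of X is countable. -/
/-- Player I has a winning strategy in the open-open game on `X`: there is a
function `μ` from finite sequences of player II's moves to nonempty open sets
such that for every play in which player II's moves `B n` are nonempty open
subsets of player I's moves prescribed by `μ`, the union `⋃ n, B n` is dense. -/
def WinningStrategyI (X : Type*) [TopologicalSpace X] : Prop :=
  ∃ μ : List (Set X) → Set X,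
    (∀ l : List (Set X), IsOpen (μ l) ∧ (μ l).Nonempty) ∧
    ∀ B : ℕ → Set X,
      (∀ n, IsOpen (B n) ∧ (B n).Nonempty ∧
        B n ⊆ μ (List.ofFn fun i : Fin n => B i)) →
      Dense (⋃ n, B n)

/-- If player I has a winning strategy in the open-open game on
`X`, then `X` has countable cellularity: every pairwise disjoint family of
nonempty open subsets of `X` is countable. -/
theorem ccc_of_winningStrategyI {X : Type*} [TopologicalSpace X]
    (h : WinningStrategyI X)
    (𝒰 : Set (Set X)) (h𝒰 : ∀ U ∈ 𝒰, IsOpen U ∧ U.Nonempty)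
    (hdisj : 𝒰.Pairwise fun U V => U ∩ V = ∅) :
    𝒰.Countable := by
  classical
  obtain ⟨μ, hμ, hwin⟩ := h
  -- player II's deterministic response at position `l`
  set move : List (Set X) → Set X := fun l =>
    if hl : ∃ V ∈ 𝒰, (μ l ∩ V).Nonempty then μ l ∩ hl.choose else μ l with hmove
  -- the chosen member of 𝒰 (junk if none)
  set pick : List (Set X) → Set X := fun l =>
    if hl : ∃ V ∈ 𝒰, (μ l ∩ V).Nonempty then hl.choose else ∅ with hpick
  -- the list of II's moves before round n
  set L : ℕ → List (Set X) := fun n => Nat.rec [] (fun _ l => l ++ [move l]) n with hL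
  set B : ℕ → Set X := fun n => move (L n) with hB
  have hLsucc : ∀ n, L (n + 1) = L n ++ [move (L n)] := fun n => rfl
  have hLofFn : ∀ n, L n = List.ofFn (fun i : Fin n => B i) := by
    intro n
    induction n with
    | zero => rfl
    | succ n ih =>
      rw [hLsucc, ih, List.ofFn_succ']
      simp [List.concat_eq_append, hB, ih]
  -- the play is legal
  have hlegal : ∀ n, IsOpen (B n) ∧ (B n).Nonempty ∧
      B n ⊆ μ (List.ofFn fun i : Fin n => B i) := by
    intro n
    rw [← hLofFn]
    have : B n = move (L n) := rfl
    rw [this, hmove]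
    by_cases hl : ∃ V ∈ 𝒰, (μ (L n) ∩ V).Nonempty
    · simp only [dif_pos hl]
      obtain ⟨hV, hne⟩ := hl.choose_spec
      exact ⟨(hμ (L n)).1.inter (h𝒰 _ hV).1, hne, Set.inter_subset_left⟩
    · simp only [dif_neg hl]
      exact ⟨(hμ (L n)).1, (hμ (L n)).2, subset_rfl⟩
  have hdense := hwin B hlegal
  -- 𝒰 is covered by the countable family of picks
  by_contra hcount
  have : ¬ 𝒰 ⊆ Set.range (fun n => pick (L n)) := by
    intro hsub
    exact hcount ((Set.countable_range _).mono hsub)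
  obtain ⟨V, hV𝒰, hVr⟩ := Set.not_subset.mp this
  -- every move is disjoint from V
  have hdisjV : ∀ n, B n ∩ V = ∅ := by
    intro n
    have hBn : B n = move (L n) := rfl
    rw [hBn, hmove]
    by_cases hl : ∃ W ∈ 𝒰, (μ (L n) ∩ W).Nonempty
    · simp only [dif_pos hl]
      obtain ⟨hW, hne⟩ := hl.choose_spec
      have hWne : hl.choose ≠ V := by
        intro heq
        exact hVr ⟨n, by simp [hpick, dif_pos hl, heq]⟩
      have := hdisj hW hV𝒰 hWne
      rw [← Set.subset_empty_iff, ← this]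
      exact Set.inter_subset_inter_left _ Set.inter_subset_right
    · simp only [dif_neg hl]
      by_contra hne
      exact hl ⟨V, hV𝒰, Set.nonempty_iff_ne_empty.mpr hne⟩
  -- but the union of moves is dense, so it meets V
  obtain ⟨hVopen, hVne⟩ := h𝒰 V hV𝒰
  obtain ⟨x, hxV, hxU⟩ := hdense.inter_open_nonempty V hVopen hVne
  obtain ⟨_, ⟨n, rfl⟩, hxB⟩ := hxU
  exact absurd (hdisjV n ▸ (Set.mem_inter hxB hxV)) (Set.notMem_empty x)
end

section
/- Let X be a topological space and f : X → Y a continuous surjection onto a topological space Y that is skeletal. If player I has a winning strategy in the open-open game on X, then player I has a winning strategy in the open-open game on Y. -/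
open Set

section

variable {X Y : Type*}

theorem Set.inter_preimage_nonempty_of_subset_closure_image [TopologicalSpace Y]
    {f : X → Y} {U : Set X} {W : Set Y} (hW : IsOpen W) (hne : W.Nonempty)
    (hsub : W ⊆ closure (f '' U)) : (U ∩ f ⁻¹' W).Nonempty := by
  obtain ⟨y, hy⟩ := hne
  obtain ⟨_, hyW, x, hxU, rfl⟩ := mem_closure_iff.mp (hsub hy) W hW hy
  exact ⟨x, hxU, hyW⟩

def simulatePlay (μ : List (Set X) → Set X) (f : X → Y) (l : List (Set Y)) : List (Set X) :=
  l.foldl (fun acc W => acc ++ [μ acc ∩ f ⁻¹' W]) []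

theorem simulatePlay_append_singleton (μ : List (Set X) → Set X) (f : X → Y)
    (l : List (Set Y)) (W : Set Y) :
    simulatePlay μ f (l ++ [W]) = simulatePlay μ f l ++ [μ (simulatePlay μ f l) ∩ f ⁻¹' W] := by
  simp only [simulatePlay, List.foldl_append, List.foldl_cons, List.foldl_nil]

theorem simulatePlay_ofFn (μ : List (Set X) → Set X) (f : X → Y) (B : ℕ → Set Y) (n : ℕ) :
    simulatePlay μ f (List.ofFn fun i : Fin n => B i) =
      List.ofFn fun i : Fin n =>
        μ (simulatePlay μ f (List.ofFn fun j : Fin i => B j)) ∩ f ⁻¹' B i := by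
  induction n with
  | zero => rfl
  | succ n ih =>
    rw [List.ofFn_succ', List.ofFn_succ']
    simp only [List.concat_eq_append, Fin.val_castSucc, Fin.val_last,
      simulatePlay_append_singleton, ih]

end

/-- If `f : X → Y` is a continuous skeletal surjection and player I
has a winning strategy in the open-open game on `X`, then player I has a winning
strategy in the open-open game on `Y`. -/
theorem winningStrategyI_of_skeletal_image
    {X Y : Type*} [TopologicalSpace X] [TopologicalSpace Y]
    (f : X → Y) (hc : Continuous f) (hs : Function.Surjective f)
    (hskel : ∀ U : Set X, IsOpen U → U.Nonempty →
      (interior (closure (f '' U))).Nonempty)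
    (hX : WinningStrategyI X) :
    WinningStrategyI Y := by
  obtain ⟨μ, hμ, hwin⟩ := hX
  refine ⟨fun l => interior (closure (f '' μ (simulatePlay μ f l))),
    fun l => ⟨isOpen_interior, hskel _ (hμ _).1 (hμ _).2⟩, fun B hB => ?_⟩
  set C : ℕ → Set X := fun n =>
    μ (simulatePlay μ f (List.ofFn fun i : Fin n => B i)) ∩ f ⁻¹' B n
  have hC : ∀ n, IsOpen (C n) ∧ (C n).Nonempty ∧ C n ⊆ μ (List.ofFn fun i : Fin n => C i) := by
    intro n
    obtain ⟨hBo, hBne, hBsub⟩ := hB n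
    refine ⟨(hμ _).1.inter (hBo.preimage hc),
      inter_preimage_nonempty_of_subset_closure_image hBo hBne
        (hBsub.trans interior_subset), ?_⟩
    rw [← simulatePlay_ofFn]
    exact inter_subset_left
  have himage : f '' ⋃ n, C n ⊆ ⋃ n, B n := by
    rw [image_iUnion]
    exact iUnion_mono fun n => (image_inter_subset _ _ _).trans
      (inter_subset_right.trans (image_preimage_subset f _))
  exact (hs.denseRange.dense_image hc (hwin C hC)).mono himage
end

section
/- Let X be a topological space and D ⊆ X a dense subspace. Then player I has a winning strategy in the open-open game on X if and only if player I has a winning strategy in the open-open game on D. -/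
open Set

section Aux

variable {X : Type*} [TopologicalSpace X]

/-- Extend an open set of the subspace `D` to an open set of `X` whose trace on `D`
is the given set. -/
def extOpen (D : Set X) (S : Set D) : Set X :=
  ⋃₀ {V : Set X | IsOpen V ∧ Subtype.val ⁻¹' V ⊆ S}

lemma extOpen_spec (D : Set X) {S : Set D} (hS : IsOpen S) :
    IsOpen (extOpen D S) ∧ Subtype.val ⁻¹' (extOpen D S) = S := by
  refine ⟨isOpen_sUnion fun V hV => hV.1, Set.Subset.antisymm ?_ ?_⟩
  · rintro x hx
    obtain ⟨V, hV, hxV⟩ := hx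
    exact hV.2 hxV
  · obtain ⟨V, hV, hVS⟩ := isOpen_induced_iff.mp hS
    intro x hx
    exact ⟨V, ⟨hV, hVS.le⟩, by rw [← hVS] at hx; exact hx⟩

lemma subset_extOpen (D : Set X) {S : Set D} (hS : IsOpen S) :
    Subtype.val '' S ⊆ extOpen D S := by
  rintro x ⟨y, hy, rfl⟩
  rw [← (extOpen_spec D hS).2] at hy
  exact hy

/-- Translate (reversed) histories of the game on `D` to (reversed) histories of the
game on `X`. -/
noncomputable def transAux (D : Set X) (μ : List (Set X) → Set X) :
    List (Set D) → List (Set X)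
  | [] => []
  | B :: r => (extOpen D B ∩ μ (transAux D μ r).reverse) :: transAux D μ r

noncomputable def transL (D : Set X) (μ : List (Set X) → Set X) (l : List (Set D)) :
    List (Set X) :=
  (transAux D μ l.reverse).reverse

lemma transL_concat (D : Set X) (μ : List (Set X) → Set X) (l : List (Set D)) (B : Set D) :
    transL D μ (l ++ [B]) = transL D μ l ++ [extOpen D B ∩ μ (transL D μ l)] := by
  simp [transL, transAux]

end Aux

/-- For a dense subspace `D` of `X`, player I has a winning
strategy in the open-open game on `X` iff player I has a winning strategy in
the open-open game on `D`. -/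
theorem winningStrategyI_iff_dense_subspace
    {X : Type*} [TopologicalSpace X] (D : Set X) (hD : Dense D) :
    WinningStrategyI X ↔ WinningStrategyI D := by
  constructor
  · rintro ⟨μ, hμ, hwin⟩
    refine ⟨fun l => Subtype.val ⁻¹' μ (transL D μ l), fun l => ?_, ?_⟩
    · refine ⟨(hμ _).1.preimage continuous_subtype_val, ?_⟩
      obtain ⟨x, hx⟩ := hD.inter_open_nonempty _ (hμ (transL D μ l)).1 (hμ _).2
      exact ⟨⟨x, hx.2⟩, hx.1⟩
    · intro B hB
      set B' : ℕ → Set X := fun n =>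
        extOpen D (B n) ∩ μ (transL D μ (List.ofFn fun i : Fin n => B i)) with hB'def
      have htrans : ∀ n,
          transL D μ (List.ofFn fun i : Fin n => B i) = List.ofFn fun i : Fin n => B' i := by
        intro n
        induction n with
        | zero => simp [transL, transAux]
        | succ n ih =>
          rw [List.ofFn_succ' (f := fun i : Fin (n + 1) => B i), List.concat_eq_append]
          simp only [Fin.coe_castSucc, Fin.val_last]
          rw [transL_concat, ih]
          rw [List.ofFn_succ' (f := fun i : Fin (n + 1) => B' i), List.concat_eq_append]
          simp only [Fin.coe_castSucc, Fin.val_last]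
          rw [← ih]
      have hrules : ∀ n, IsOpen (B' n) ∧ (B' n).Nonempty ∧
          B' n ⊆ μ (List.ofFn fun i : Fin n => B' i) := by
        intro n
        refine ⟨((extOpen_spec D (hB n).1).1).inter (hμ _).1, ?_, ?_⟩
        · obtain ⟨x, hx⟩ := (hB n).2.1
          exact ⟨x.val, subset_extOpen D (hB n).1 ⟨x, hx, rfl⟩, (hB n).2.2 hx⟩
        · rw [← htrans n]; exact Set.inter_subset_right
      have hdense := hwin B' hrules
      rw [dense_iff_inter_open]
      intro U hU hUne
      obtain ⟨V, hV, rfl⟩ := isOpen_induced_iff.mp hU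
      obtain ⟨d, hd⟩ := hUne
      obtain ⟨y, hyV, hyU⟩ := hdense.inter_open_nonempty V hV ⟨d.val, hd⟩
      obtain ⟨n, hyn⟩ := Set.mem_iUnion.mp hyU
      obtain ⟨z, hz⟩ := hD.inter_open_nonempty (V ∩ B' n) (hV.inter (hrules n).1)
        ⟨y, hyV, hyn⟩
      have hzB : (⟨z, hz.2⟩ : D) ∈ B n := by
        have : z ∈ extOpen D (B n) := hz.1.2.1
        rw [← (extOpen_spec D (hB n).1).2]
        exact this
      exact ⟨⟨z, hz.2⟩, hz.1.1, Set.mem_iUnion.mpr ⟨n, hzB⟩⟩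
  · rintro ⟨ν, hν, hwin⟩
    refine ⟨fun l => extOpen D (ν (l.map fun V => (Subtype.val ⁻¹' V : Set D))),
      fun l => ?_, ?_⟩
    · refine ⟨(extOpen_spec D (hν _).1).1, ?_⟩
      obtain ⟨x, hx⟩ := (hν _).2
      exact ⟨x.val, subset_extOpen D (hν _).1 ⟨x, hx, rfl⟩⟩
    · intro B' hB'
      set B : ℕ → Set D := fun n => Subtype.val ⁻¹' B' n with hBdef
      have hmap : ∀ n, (List.ofFn fun i : Fin n => B' i).map
          (fun V => (Subtype.val ⁻¹' V : Set D)) = List.ofFn fun i : Fin n => B i := by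
        intro n; rw [List.map_ofFn]; rfl
      have hrules : ∀ n, IsOpen (B n) ∧ (B n).Nonempty ∧
          B n ⊆ ν (List.ofFn fun i : Fin n => B i) := by
        intro n
        refine ⟨(hB' n).1.preimage continuous_subtype_val, ?_, ?_⟩
        · obtain ⟨x, hx⟩ := hD.inter_open_nonempty _ (hB' n).1 (hB' n).2.1
          exact ⟨⟨x, hx.2⟩, hx.1⟩
        · intro x hx
          have h1 : x.val ∈ extOpen D (ν ((List.ofFn fun i : Fin n => B' i).map
              fun V => (Subtype.val ⁻¹' V : Set D))) := (hB' n).2.2 hx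
          have h2 : x ∈ ν ((List.ofFn fun i : Fin n => B' i).map
              fun V => (Subtype.val ⁻¹' V : Set D)) := by
            rw [← (extOpen_spec D (hν _).1).2]
            exact h1
          rwa [hmap n] at h2
      have hdense := hwin B hrules
      rw [dense_iff_inter_open]
      intro U hU hUne
      obtain ⟨x, hx⟩ := hD.inter_open_nonempty U hU hUne
      obtain ⟨d, hd⟩ := hdense.inter_open_nonempty (Subtype.val ⁻¹' U)
        (hU.preimage continuous_subtype_val) ⟨⟨x, hx.2⟩, hx.1⟩
      obtain ⟨n, hdn⟩ := Set.mem_iUnion.mp hd.2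
      exact ⟨d.val, hd.1, Set.mem_iUnion.mpr ⟨n, hdn⟩⟩
end

section
/- Let {X_t}_{t∈T} be a family of topological spaces such that player I has a winning strategy in the open-open game on each finite subproduct ∏_{t∈F} X_t for finite F ⊆ T. If every nonempty basic open box of the full product ∏_{t∈T} X_t depends on finitely many coordinates, then player I has a winning strategy in the open-open game on ∏_{t∈T} X_t, provided a strategy can be assembled by bookkeeping countably many coordinates; in particular, a countable product of I-favorable spaces is I-favorable. -/
/-!
Player I plays countably many games at once, one on each finite subproduct `∏_{t ∈ G_k} X_t`,
interleaved along `Nat.pair`. Each move of player II contains an open cylinder over a finite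
set of coordinates; `G_k` collects the coordinates of the cylinders chosen in the first `k`
moves, and in the `k`-th game player II is credited with the traces of her later cylinders on
`G_k`. Given a basic open set `W` over finitely many coordinates `F`, choose `k` so that `G_k`
contains every coordinate of `F` that any cylinder ever uses; density of the traces in the
`k`-th game then produces a cylinder meeting `W`, since off `G_k` the cylinder and `W` constrain
disjoint sets of coordinates.
-/
open Set MeasureTheory

section Cylinders

variable {T : Type*} {X : T → Type*}

theorem cylinder_inter_nonempty_of_restrict_eq {s F G : Finset T} {S : Set (∀ t : s, X t)}
    {U : Set (∀ t : F, X t)} (hG : (s ∩ F : Set T) ⊆ G) {x y : ∀ t, X t} (hx : x ∈ cylinder s S)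
    (hy : y ∈ cylinder F U) (hxy : G.restrict x = G.restrict y) :
    (cylinder s S ∩ cylinder F U).Nonempty := by
  classical
  refine ⟨(s : Set T).piecewise x y, ?_, ?_⟩
  · have : s.restrict ((s : Set T).piecewise x y) = s.restrict x :=
      funext fun t => piecewise_eq_of_mem _ _ _ t.2
    rwa [mem_cylinder, this]
  · have : F.restrict ((s : Set T).piecewise x y) = F.restrict y := by
      funext ⟨t, htF⟩
      by_cases hts : t ∈ s
      · exact (piecewise_eq_of_mem _ _ _ hts).trans (congrFun hxy ⟨t, hG ⟨hts, htF⟩⟩)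
      · exact piecewise_eq_of_notMem _ _ _ hts
    rwa [mem_cylinder, this]

variable [∀ t, TopologicalSpace (X t)]

theorem Finset.isOpenMap_restrict (s : Finset T) : IsOpenMap (s.restrict (π := X)) := by
  classical
  exact isOpenMap_fst.comp (Homeomorph.piEquivPiSubtypeProd (· ∈ s) X).isOpenMap

theorem isOpen_cylinder {s : Finset T} {S : Set (∀ t : s, X t)} (hS : IsOpen S) :
    IsOpen (cylinder s S) :=
  hS.preimage (Finset.continuous_restrict s)

theorem exists_cylinder_subset {W : Set (∀ t, X t)} (hW : IsOpen W) {x : ∀ t, X t} (hx : x ∈ W) :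
    ∃ (s : Finset T) (S : Set (∀ t : s, X t)), IsOpen S ∧ x ∈ cylinder s S ∧ cylinder s S ⊆ W := by
  obtain ⟨s, U, hU, hsU⟩ := isOpen_pi_iff.1 hW x hx
  have hcyl : cylinder s (univ.pi fun t : s => U t) = (s : Set T).pi U := by
    ext y
    simp
  refine ⟨s, univ.pi fun t : s => U t, isOpen_set_pi finite_univ fun t _ => (hU t t.2).1, ?_, ?_⟩
  · rw [hcyl]
    exact fun t ht => (hU t ht).2
  · rwa [hcyl]

end Cylinders

theorem Finset.exists_inter_subset_biUnion_range {α : Type*} [DecidableEq α] (f : ℕ → Finset α)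
    (F : Finset α) : ∃ k, ∀ m, (f m ∩ F : Set α) ⊆ (Finset.range k).biUnion f := by
  classical
  have hmono : Monotone fun k => ((Finset.range k).biUnion f : Set α) := fun k k' hk =>
    Finset.coe_subset.2 (Finset.biUnion_subset_biUnion_of_subset_left _ (Finset.range_mono hk))
  obtain ⟨k, hk⟩ := hmono.directed_le.exists_mem_subset_of_finset_subset_biUnion
    (s := F.filter fun t => ∃ m, t ∈ f m) fun t ht => by
      obtain ⟨m, hm⟩ := (Finset.mem_filter.1 ht).2
      exact mem_iUnion.2 ⟨m + 1, Finset.mem_biUnion.2 ⟨m, Finset.self_mem_range_succ m, hm⟩⟩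
  exact ⟨k, fun m t ⟨htm, htF⟩ => hk (Finset.mem_filter.2 ⟨htF, m, htm⟩)⟩

theorem WinningStrategyI.nonempty {Y : Type*} [TopologicalSpace Y] (h : WinningStrategyI Y) :
    Nonempty Y :=
  let ⟨_, hμ, _⟩ := h
  (hμ []).2.to_subtype.map Subtype.val

theorem List.getD_ofFn {α : Type*} (B : ℕ → α) {m n : ℕ} (d : α) (h : m < n) :
    (List.ofFn fun i : Fin n => B i).getD m d = B m := by
  simp [List.getD_eq_getElem?_getD, h]

namespace OpenOpenGame

def IsPlay {Y : Type*} [TopologicalSpace Y] (μ : List (Set Y) → Set Y) (B : ℕ → Set Y) : Prop :=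
  ∀ n, IsOpen (B n) ∧ (B n).Nonempty ∧ B n ⊆ μ (List.ofFn fun i : Fin n => B i)

variable {T : Type*} {X : T → Type*} [DecidableEq T]
  (supp : Set (∀ t, X t) → Finset T) (S : ∀ B, Set (∀ t : supp B, X t))
  (μ : ∀ G : Finset T, List (Set (∀ t : G, X t)) → Set (∀ t : G, X t))

def coordsUpTo (B : ℕ → Set (∀ t, X t)) (k : ℕ) : Finset T :=
  (Finset.range k).biUnion fun i => supp (B i)

def trace (G : Finset T) (B : Set (∀ t, X t)) : Set (∀ t : G, X t) :=
  G.restrict '' cylinder (supp B) (S B)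

def subgameMove (B : ℕ → Set (∀ t, X t)) (k j : ℕ) : Set (∀ t, X t) :=
  (coordsUpTo supp B k).restrict ⁻¹'
    μ _ (List.ofFn fun i : Fin j => trace supp S (coordsUpTo supp B k) (B (k.pair i)))

-- Round `Nat.pair k j` is round `j` of the `k`-th game; its coordinates come from rounds `< k`,
-- which precede it since `k ≤ Nat.pair k j`.
def productStrategy (l : List (Set (∀ t, X t))) : Set (∀ t, X t) :=
  subgameMove supp S μ (fun i => l.getD i ∅) l.length.unpair.1 l.length.unpair.2

theorem subgameMove_congr {B B' : ℕ → Set (∀ t, X t)} {k j : ℕ}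
    (h : ∀ i < k.pair j, B' i = B i) : subgameMove supp S μ B' k j = subgameMove supp S μ B k j := by
  have hG : coordsUpTo supp B' k = coordsUpTo supp B k :=
    Finset.biUnion_congr rfl fun i hi => by
      rw [h i ((Finset.mem_range.1 hi).trans_le (Nat.left_le_pair k j))]
  unfold subgameMove
  rw [hG]
  congr 3
  funext i
  rw [h _ (Nat.pair_lt_pair_right k i.2)]

theorem productStrategy_ofFn_pair (B : ℕ → Set (∀ t, X t)) (k j : ℕ) :
    productStrategy supp S μ (List.ofFn fun i : Fin (k.pair j) => B i) =
      subgameMove supp S μ B k j := by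
  unfold productStrategy
  rw [List.length_ofFn, Nat.unpair_pair]
  exact subgameMove_congr supp S μ fun i hi => List.getD_ofFn B ∅ hi

variable [∀ t, TopologicalSpace (X t)] {supp S μ}

theorem IsPlay.subgame {B : ℕ → Set (∀ t, X t)} (hB : IsPlay (productStrategy supp S μ) B)
    (hS : ∀ B, IsOpen B → B.Nonempty →
      IsOpen (S B) ∧ (cylinder (supp B) (S B)).Nonempty ∧ cylinder (supp B) (S B) ⊆ B)
    (k : ℕ) :
    IsPlay (μ (coordsUpTo supp B k)) fun j => trace supp S (coordsUpTo supp B k) (B (k.pair j)) := by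
  intro j
  obtain ⟨hBopen, hBne, hBmove⟩ := hB (k.pair j)
  obtain ⟨hSopen, hSne, hSB⟩ := hS _ hBopen hBne
  rw [productStrategy_ofFn_pair] at hBmove
  exact ⟨Finset.isOpenMap_restrict _ _ (isOpen_cylinder hSopen), hSne.image _,
    image_subset_iff.2 (hSB.trans hBmove)⟩

theorem dense_iUnion_of_dense_trace {B : ℕ → Set (∀ t, X t)}
    (hsub : ∀ n, cylinder (supp (B n)) (S (B n)) ⊆ B n)
    (hdense : ∀ k, Dense (⋃ j, trace supp S (coordsUpTo supp B k) (B (k.pair j)))) :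
    Dense (⋃ n, B n) := by
  rw [dense_iff_inter_open]
  rintro W hW ⟨x, hx⟩
  obtain ⟨F, U, hU, hxU, hUW⟩ := exists_cylinder_subset hW hx
  obtain ⟨k, hk⟩ := Finset.exists_inter_subset_biUnion_range (fun n => supp (B n)) F
  obtain ⟨_, ⟨y, hyU, rfl⟩, hy⟩ := (hdense k).inter_open_nonempty _
    (Finset.isOpenMap_restrict _ _ (isOpen_cylinder hU)) ⟨_, x, hxU, rfl⟩
  obtain ⟨j, z, hzS, hzy⟩ := mem_iUnion.1 hy
  obtain ⟨w, hwS, hwU⟩ := cylinder_inter_nonempty_of_restrict_eq (hk _) hzS hyU hzy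
  exact ⟨w, hUW hwU, mem_iUnion.2 ⟨_, hsub _ hwS⟩⟩

end OpenOpenGame

open OpenOpenGame

/-- If player I has a winning strategy in the open-open game on
every finite subproduct `∏_{t ∈ F} X_t` of a family of spaces, then player I
has a winning strategy in the open-open game on the full product `∏_{t ∈ T} X_t`
(in particular, a countable product of I-favorable spaces is I-favorable). -/
theorem winningStrategyI_product
    {T : Type*} (X : T → Type*) [∀ t, TopologicalSpace (X t)]
    (hfin : ∀ F : Finset T, WinningStrategyI (∀ t : F, X t)) :
    WinningStrategyI (∀ t, X t) := by
  classical
  have hne (t : T) : Nonempty (X t) :=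
    (hfin {t}).nonempty.map fun y => y ⟨t, Finset.mem_singleton_self t⟩
  choose μ hμ hμwin using hfin
  have hcyl (B : Set (∀ t, X t)) : ∃ (s : Finset T) (S : Set (∀ t : s, X t)),
      IsOpen B → B.Nonempty → IsOpen S ∧ (cylinder s S).Nonempty ∧ cylinder s S ⊆ B := by
    by_cases hB : IsOpen B ∧ B.Nonempty
    · obtain ⟨s, S, hS, hxS, hSB⟩ := exists_cylinder_subset hB.1 hB.2.some_mem
      exact ⟨s, S, fun _ _ => ⟨hS, ⟨_, hxS⟩, hSB⟩⟩
    · exact ⟨∅, ∅, fun h h' => absurd ⟨h, h'⟩ hB⟩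
  choose supp S hS using hcyl
  refine ⟨productStrategy supp S μ, fun l => ⟨(hμ _ _).1.preimage (Finset.continuous_restrict _),
    (hμ _ _).2.preimage (Subtype.surjective_restrict _)⟩, fun B hB => ?_⟩
  exact dense_iUnion_of_dense_trace (fun n => (hS _ (hB n).1 (hB n).2.1).2.2) fun k =>
    hμwin _ _ (IsPlay.subgame hB hS k)
end
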